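/- arXiv:1808.04474 — 4 statements merged into one kernel-verified Lean document; each statement's English description precedes it below -/
import Mathlib

section
/- Fix V̄ > 0 and α ∈ (0,1), set c = ((1/α) − 1)^{1/4}, and define q_α(h) = α (h^4 + 2 c h^3 + 3 (1 + c^2) h^2 + 2 c h + c^2). Then for every real h one has the identity 𝒫_α(h) = q_α(h) (h − c)^2 + 4 (L(α) − V̄) h^3, and q_α(h) > 0 for every h > 0. Consequently, for every h > 0, 𝒫_α(h) is ≥, =, or ≤ q_α(h)(h − c)^2 according as V̄ is ≤, =, or ≥ L(α), respectively. -/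
/-- The mass polynomial 𝒫_α(h) = α h^6 + 3α h^4 − 4V̄ h^3 + 3(1−α) h^2 + (1−α). -/
noncomputable def massPoly (Vbar α h : ℝ) : ℝ :=
  α * h ^ 6 + 3 * α * h ^ 4 - 4 * Vbar * h ^ 3 + 3 * (1 - α) * h ^ 2 + (1 - α)

/-- The limiting function L(α) = α^{3/4}(1−α)^{1/4} + α^{1/4}(1−α)^{3/4}. -/
noncomputable def Lfun (α : ℝ) : ℝ :=
  α ^ ((3 : ℝ) / 4) * (1 - α) ^ ((1 : ℝ) / 4) + α ^ ((1 : ℝ) / 4) * (1 - α) ^ ((3 : ℝ) / 4)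

/-!
With `c = ((1 - α)/α)^{1/4}` one has `1 - α = α c⁴` and `L(α) = α c + α c³`, after which the
claimed decomposition of `𝒫_α` is a polynomial identity in `h` and `c`. Since `q_α` has
nonnegative coefficients and positive leading coefficient, the sign of `𝒫_α(h) - q_α(h)(h - c)²`
for `h > 0` is the sign of `L(α) - V̄`.
-/

lemma Real.rpow_one_div_four_pow_four {x : ℝ} (hx : 0 ≤ x) : (x ^ ((1 : ℝ) / 4)) ^ 4 = x := by
  rw [one_div]
  exact_mod_cast Real.rpow_inv_natCast_pow hx four_ne_zero

lemma Real.rpow_three_div_four {x : ℝ} (hx : 0 ≤ x) :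
    x ^ ((3 : ℝ) / 4) = (x ^ ((1 : ℝ) / 4)) ^ 3 := by
  rw [← Real.rpow_natCast, ← Real.rpow_mul hx]
  norm_num

lemma mul_one_div_sub_one_rpow_quarter_pow_four {α : ℝ} (hα₀ : 0 < α) (hα₁ : α ≤ 1) :
    α * ((1 / α - 1) ^ ((1 : ℝ) / 4)) ^ 4 = 1 - α := by
  rw [Real.rpow_one_div_four_pow_four (sub_nonneg.2 (one_le_one_div hα₀ hα₁))]
  field_simp

lemma Lfun_eq_mul_add_mul_pow_three {α : ℝ} (hα₀ : 0 < α) (hα₁ : α ≤ 1) :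
    let c : ℝ := (1 / α - 1) ^ ((1 : ℝ) / 4)
    Lfun α = α * c + α * c ^ 3 := by
  intro c
  have h1α : 0 ≤ 1 - α := by linarith
  set u := α ^ ((1 : ℝ) / 4)
  set v := (1 - α) ^ ((1 : ℝ) / 4)
  have hu : 0 < u := Real.rpow_pos_of_pos hα₀ _
  have hc : c = v / u := by
    rw [← Real.div_rpow h1α hα₀.le, sub_div, div_self hα₀.ne']
  have hαu : u ^ 4 = α := Real.rpow_one_div_four_pow_four hα₀.le
  rw [Lfun, Real.rpow_three_div_four hα₀.le, Real.rpow_three_div_four h1α, hc]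
  field_simp
  linear_combination (u ^ 2 * v + v ^ 3) * hαu

lemma massPoly_eq_mul_sq_add {Vbar α c : ℝ} (hc : α * c ^ 4 = 1 - α) (h : ℝ) :
    massPoly Vbar α h =
      α * (h ^ 4 + 2 * c * h ^ 3 + 3 * (1 + c ^ 2) * h ^ 2 + 2 * c * h + c ^ 2) * (h - c) ^ 2
        + 4 * (α * c + α * c ^ 3 - Vbar) * h ^ 3 := by
  rw [massPoly]
  linear_combination -(3 * h ^ 2 + 1) * hc

theorem stmt1_general (Vbar α : ℝ) (hα : α ∈ Set.Ioo (0 : ℝ) 1) :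
    let c : ℝ := (1 / α - 1) ^ ((1 : ℝ) / 4)
    let q : ℝ → ℝ := fun h =>
      α * (h ^ 4 + 2 * c * h ^ 3 + 3 * (1 + c ^ 2) * h ^ 2 + 2 * c * h + c ^ 2)
    (∀ h : ℝ, massPoly Vbar α h = q h * (h - c) ^ 2 + 4 * (Lfun α - Vbar) * h ^ 3) ∧
    (∀ h : ℝ, 0 < h → 0 < q h) ∧
    (∀ h : ℝ, 0 < h →
      (Vbar ≤ Lfun α → q h * (h - c) ^ 2 ≤ massPoly Vbar α h) ∧
      (Vbar = Lfun α → massPoly Vbar α h = q h * (h - c) ^ 2) ∧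
      (Lfun α ≤ Vbar → massPoly Vbar α h ≤ q h * (h - c) ^ 2)) := by
  intro c q
  obtain ⟨hα₀, hα₁⟩ := hα
  have hc₀ : 0 ≤ c := Real.rpow_nonneg (sub_nonneg.2 (one_le_one_div hα₀ hα₁.le)) _
  have hdecomp (h : ℝ) : massPoly Vbar α h = q h * (h - c) ^ 2 + 4 * (Lfun α - Vbar) * h ^ 3 := by
    rw [Lfun_eq_mul_add_mul_pow_three hα₀ hα₁.le]
    exact massPoly_eq_mul_sq_add (mul_one_div_sub_one_rpow_quarter_pow_four hα₀ hα₁.le) h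
  have hq (h : ℝ) (hh : 0 < h) : 0 < q h := by positivity
  refine ⟨hdecomp, hq, fun h hh => ?_⟩
  have hh3 : 0 < h ^ 3 := by positivity
  refine ⟨fun hle => ?_, fun heq => ?_, fun hge => ?_⟩ <;> rw [hdecomp h]
  · nlinarith
  · rw [heq]; ring
  · nlinarith

theorem stmt1 (Vbar α : ℝ) (hV : 0 < Vbar) (hα : α ∈ Set.Ioo (0 : ℝ) 1) :
    let c : ℝ := (1 / α - 1) ^ ((1 : ℝ) / 4)
    let q : ℝ → ℝ := fun h =>
      α * (h ^ 4 + 2 * c * h ^ 3 + 3 * (1 + c ^ 2) * h ^ 2 + 2 * c * h + c ^ 2)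
    (∀ h : ℝ, massPoly Vbar α h = q h * (h - c) ^ 2 + 4 * (Lfun α - Vbar) * h ^ 3) ∧
    (∀ h : ℝ, 0 < h → 0 < q h) ∧
    (∀ h : ℝ, 0 < h →
      (Vbar ≤ Lfun α → q h * (h - c) ^ 2 ≤ massPoly Vbar α h) ∧
      (Vbar = Lfun α → massPoly Vbar α h = q h * (h - c) ^ 2) ∧
      (Lfun α ≤ Vbar → massPoly Vbar α h ≤ q h * (h - c) ^ 2)) :=
  stmt1_general Vbar α hα
end

section
/- Fix V̄ > 1 and α ∈ (0,1). The mass polynomial 𝒫_α has exactly one zero h_L in the interval (1, ∞), and this zero satisfies h_L > ((1/α) − 1)^{1/4}. -/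
open Set

lemma massPoly_neg_of_mul_pow_four_le {Vbar α h : ℝ} (hV : 1 ≤ Vbar) (h1 : 1 < h)
    (hle : α * h ^ 4 ≤ 1 - α) : massPoly Vbar α h < 0 := by
  have hh : 0 < h := by linarith
  have hβ : 0 < 1 - α := by nlinarith [pow_pos hh 4]
  have hfactor : α * h ^ 3 * (h ^ 2 + h + 4) < (1 - α) * (4 * h ^ 2 + h + 1) := by
    refine lt_of_mul_lt_mul_left ?_ hh.le
    calc h * (α * h ^ 3 * (h ^ 2 + h + 4)) = α * h ^ 4 * (h ^ 2 + h + 4) := by ring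
      _ ≤ (1 - α) * (h ^ 2 + h + 4) := by gcongr
      _ < (1 - α) * (h * (4 * h ^ 2 + h + 1)) := by gcongr; nlinarith
      _ = h * ((1 - α) * (4 * h ^ 2 + h + 1)) := by ring
  have hV1 : massPoly Vbar α h ≤ massPoly 1 α h := by
    unfold massPoly; nlinarith [pow_pos hh 3]
  have hfactor_eq : massPoly 1 α h
      = (h - 1) * (α * h ^ 3 * (h ^ 2 + h + 4) - (1 - α) * (4 * h ^ 2 + h + 1)) := by
    unfold massPoly; ring
  linarith [mul_neg_of_pos_of_neg (sub_pos.2 h1) (sub_neg.2 hfactor)]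

lemma massPoly_nonneg_of_le {Vbar α M : ℝ} (hα0 : 0 < α) (hα1 : α ≤ 1) (hM : 1 ≤ M)
    (hMV : 4 * Vbar ≤ α * M) : 0 ≤ massPoly Vbar α M := by
  have hM3 : 4 * Vbar ≤ α * M ^ 3 := hMV.trans (by gcongr; exact le_self_pow₀ hM (by norm_num))
  have hlead : 0 ≤ M ^ 3 * (α * M ^ 3 - 4 * Vbar) :=
    mul_nonneg (pow_nonneg (by linarith) 3) (by linarith)
  unfold massPoly
  nlinarith [pow_nonneg (zero_le_one.trans hM) 4, pow_nonneg (zero_le_one.trans hM) 2]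

lemma exists_massPoly_eq_zero {Vbar α : ℝ} (hV : 1 < Vbar) (hα0 : 0 < α) (hα1 : α ≤ 1) :
    ∃ h, 1 < h ∧ massPoly Vbar α h = 0 := by
  set M := max 1 (4 * Vbar / α)
  have hM : 1 ≤ M := le_max_left _ _
  have hMV : 4 * Vbar ≤ α * M := by
    rw [← div_le_iff₀' hα0]; exact le_max_right _ _
  have hP1 : massPoly Vbar α 1 < 0 := by unfold massPoly; linarith
  have hcont : ContinuousOn (massPoly Vbar α) (Icc 1 M) := by
    unfold massPoly; fun_prop
  obtain ⟨h, ⟨h1, -⟩, h0⟩ :=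
    intermediate_value_Ioc hM hcont ⟨hP1, massPoly_nonneg_of_le hα0 hα1 hM hMV⟩
  exact ⟨h, h1, h0⟩

lemma hasDerivAt_massPoly (Vbar α h : ℝ) :
    HasDerivAt (massPoly Vbar α)
      (6 * α * h ^ 5 + 12 * α * h ^ 3 - 12 * Vbar * h ^ 2 + 6 * (1 - α) * h) h := by
  have := (((((hasDerivAt_pow 6 h).const_mul α).add ((hasDerivAt_pow 4 h).const_mul (3 * α))).sub
    ((hasDerivAt_pow 3 h).const_mul (4 * Vbar))).add
      ((hasDerivAt_pow 2 h).const_mul (3 * (1 - α)))).add_const (1 - α)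
  exact this.congr_deriv (by norm_num; ring)

lemma hasDerivAt_massPoly_div_pow_three (Vbar α : ℝ) {h : ℝ} (hh : h ≠ 0) :
    HasDerivAt (fun x => massPoly Vbar α x / x ^ 3)
      (3 * (h ^ 2 + 1) * (α * h ^ 4 - (1 - α)) / h ^ 4) h := by
  refine ((hasDerivAt_massPoly Vbar α h).div (hasDerivAt_pow 3 h) (pow_ne_zero 3 hh)).congr_deriv ?_
  simp only [massPoly]
  field_simp
  ring

lemma strictMonoOn_massPoly_div_pow_three (Vbar : ℝ) {α a : ℝ} (hα : 0 < α) (ha : 0 < a)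
    (hle : 1 - α ≤ α * a ^ 4) : StrictMonoOn (fun x => massPoly Vbar α x / x ^ 3) (Ici a) := by
  refine strictMonoOn_of_deriv_pos (convex_Ici a) ?_ fun x hx => ?_
  · exact fun x hx => (hasDerivAt_massPoly_div_pow_three Vbar α
      (ha.trans_le hx).ne').continuousAt.continuousWithinAt
  · rw [interior_Ici] at hx
    have hx0 : 0 < x := ha.trans hx
    rw [(hasDerivAt_massPoly_div_pow_three Vbar α hx0.ne').deriv]
    have : α * a ^ 4 < α * x ^ 4 := by gcongr; exact hx
    have : 0 < α * x ^ 4 - (1 - α) := by linarith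
    positivity

lemma eq_of_massPoly_eq_zero {Vbar α a b : ℝ} (hα : 0 < α) (ha : 0 < a) (hb : 0 < b)
    (hla : 1 - α ≤ α * a ^ 4) (hlb : 1 - α ≤ α * b ^ 4)
    (ha0 : massPoly Vbar α a = 0) (hb0 : massPoly Vbar α b = 0) : a = b := by
  have hmin : 1 - α ≤ α * min a b ^ 4 := by
    rcases min_choice a b with h | h <;> rw [h] <;> assumption
  refine (strictMonoOn_massPoly_div_pow_three Vbar hα (lt_min ha hb) hmin).injOn
    (min_le_left a b) (min_le_right a b) ?_
  simp only [ha0, hb0, zero_div]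

lemma rpow_one_div_four_lt {x c : ℝ} (hx : 0 ≤ x) (hc : 0 ≤ c) (hxc : x < c ^ 4) :
    x ^ ((1 : ℝ) / 4) < c := by
  rw [one_div, Real.rpow_inv_lt_iff_of_pos hx hc (by norm_num)]
  exact_mod_cast hxc

theorem stmt4 (Vbar α : ℝ) (hV : 1 < Vbar) (hα : α ∈ Set.Ioo (0 : ℝ) 1) :
    ∃ hL : ℝ, 1 < hL ∧ massPoly Vbar α hL = 0 ∧ (1 / α - 1) ^ ((1 : ℝ) / 4) < hL ∧
      ∀ h : ℝ, 1 < h → massPoly Vbar α h = 0 → h = hL := by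
  obtain ⟨hα0, hα1⟩ := hα
  have root_gt : ∀ h, 1 < h → massPoly Vbar α h = 0 → 1 - α < α * h ^ 4 := by
    intro h h1 h0
    by_contra! hle
    exact (massPoly_neg_of_mul_pow_four_le hV.le h1 hle).ne h0
  obtain ⟨hL, hL1, hL0⟩ := exists_massPoly_eq_zero hV hα0 hα1.le
  refine ⟨hL, hL1, hL0, rpow_one_div_four_lt ?_ (by linarith) ?_, fun h h1 h0 => ?_⟩
  · rw [sub_nonneg, le_div_iff₀ hα0, one_mul]; exact hα1.le
  · rw [div_sub_one hα0.ne', div_lt_iff₀ hα0]; linarith [root_gt hL hL1 hL0]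
  · exact eq_of_massPoly_eq_zero hα0 (by linarith) (by linarith)
      (root_gt h h1 h0).le (root_gt hL hL1 hL0).le h0 hL0
end

section
/- Fix V̄ = 1 and α ∈ (0,1). If 0 < α < 1/2, then the mass polynomial 𝒫_α has exactly one zero h_L in the interval (1, ∞), and this zero satisfies h_L > ((1/α) − 1)^{1/4}. If 1/2 ≤ α < 1, then 𝒫_α has no zero in (1, ∞). -/
noncomputable def massRatio (h : ℝ) : ℝ :=
  (4 * h ^ 2 + h + 1) / ((h + 1) * (h ^ 4 + 4 * h ^ 2 + 1))

lemma massPoly_one_eq_mul (α h : ℝ) :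
    massPoly 1 α h =
      (h - 1) * (α * ((h + 1) * (h ^ 4 + 4 * h ^ 2 + 1)) - (4 * h ^ 2 + h + 1)) := by
  unfold massPoly; ring

lemma massPoly_one_eq_zero_iff {α h : ℝ} (h0 : 0 ≤ h) (h1 : h ≠ 1) :
    massPoly 1 α h = 0 ↔ massRatio h = α := by
  have hD : (h + 1) * (h ^ 4 + 4 * h ^ 2 + 1) ≠ 0 := by positivity
  rw [massPoly_one_eq_mul, mul_eq_zero, sub_eq_zero, sub_eq_zero, or_iff_right h1, massRatio,
    div_eq_iff hD]
  exact eq_comm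

lemma massRatio_one : massRatio 1 = 1 / 2 := by
  norm_num [massRatio]

lemma massRatio_strictAntiOn : StrictAntiOn massRatio (Set.Ici 0) := by
  intro a (ha : 0 ≤ a) b _ hab
  have hb : 0 < b := ha.trans_lt hab
  rw [massRatio, massRatio, div_lt_div_iff₀ (by positivity) (by positivity), ← sub_pos]
  have cross : (4 * a ^ 2 + a + 1) * ((b + 1) * (b ^ 4 + 4 * b ^ 2 + 1))
      - (4 * b ^ 2 + b + 1) * ((a + 1) * (a ^ 4 + 4 * a ^ 2 + 1))
      = (b - a) * (4 * b ^ 2 + b ^ 3 + b ^ 4 + 4 * a * b + 5 * a * b ^ 2 + 2 * a * b ^ 3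
        + a * b ^ 4 + 4 * a ^ 2 + 5 * a ^ 2 * b + 18 * a ^ 2 * b ^ 2 + 5 * a ^ 2 * b ^ 3
        + 4 * a ^ 2 * b ^ 4 + a ^ 3 + 2 * a ^ 3 * b + 5 * a ^ 3 * b ^ 2 + 4 * a ^ 3 * b ^ 3
        + a ^ 4 + a ^ 4 * b + 4 * a ^ 4 * b ^ 2) := by ring
  rw [cross]
  exact mul_pos (sub_pos.2 hab) (by positivity)

lemma continuousOn_massRatio : ContinuousOn massRatio (Set.Ici 0) := by
  refine ContinuousOn.div (by fun_prop) (by fun_prop) fun h (hh : 0 ≤ h) => ?_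
  positivity

lemma massRatio_lt_inv {h : ℝ} (hh : 0 < h) : massRatio h < h⁻¹ := by
  rw [massRatio, div_lt_iff₀ (by positivity), inv_mul_eq_div, lt_div_iff₀ hh]
  nlinarith [pow_pos hh 4, pow_pos hh 5]

lemma one_lt_massRatio_mul {h : ℝ} (hh : 1 < h) : 1 < massRatio h * (h ^ 4 + 1) := by
  have h0 : 0 < h := one_pos.trans hh
  rw [massRatio, div_mul_eq_mul_div, one_lt_div (by positivity), ← sub_pos]
  have cross : (4 * h ^ 2 + h + 1) * (h ^ 4 + 1) - (h + 1) * (h ^ 4 + 4 * h ^ 2 + 1)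
      = 4 * h ^ 3 * (h ^ 3 - 1) := by ring
  rw [cross]
  exact mul_pos (by positivity) (sub_pos.2 (one_lt_pow₀ hh (by norm_num)))

lemma exists_massRatio_eq {α : ℝ} (h0 : 0 < α) (h1 : α < 1 / 2) :
    ∃ h, 1 < h ∧ massRatio h = α := by
  have hα : 1 ≤ α⁻¹ := (one_le_inv₀ h0).2 (by linarith)
  have hcont : ContinuousOn massRatio (Set.Icc 1 α⁻¹) :=
    continuousOn_massRatio.mono fun h hh => zero_le_one.trans hh.1
  have hmem : α ∈ Set.Ioo (massRatio α⁻¹) (massRatio 1) := by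
    refine ⟨?_, massRatio_one ▸ h1⟩
    simpa using massRatio_lt_inv (inv_pos.2 h0)
  obtain ⟨h, ⟨hh, -⟩, hρ⟩ := intermediate_value_Ioo' hα hcont hmem
  exact ⟨h, hh, hρ⟩

lemma rpow_inv_massRatio_sub_one_lt {h : ℝ} (hh : 1 < h) :
    (1 / massRatio h - 1) ^ ((1 : ℝ) / 4) < h := by
  have h0 : 0 < h := one_pos.trans hh
  have hρ := one_lt_massRatio_mul hh
  have hρ0 : 0 < massRatio h := pos_of_mul_pos_left (one_pos.trans hρ) (by positivity)
  have hρ1 : massRatio h ≤ 1 := ((massRatio_lt_inv h0).trans (inv_lt_one_of_one_lt₀ hh)).le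
  have hbase : 0 ≤ 1 / massRatio h - 1 := sub_nonneg.2 (one_le_one_div hρ0 hρ1)
  rw [one_div (4 : ℝ), Real.rpow_inv_lt_iff_of_pos hbase h0.le (by norm_num),
    div_sub_one hρ0.ne', div_lt_iff₀ hρ0]
  norm_cast
  linarith

theorem stmt5 (α : ℝ) (hα : α ∈ Set.Ioo (0 : ℝ) 1) :
    (α < 1 / 2 →
      ∃ hL : ℝ, 1 < hL ∧ massPoly 1 α hL = 0 ∧ (1 / α - 1) ^ ((1 : ℝ) / 4) < hL ∧
        ∀ h : ℝ, 1 < h → massPoly 1 α h = 0 → h = hL) ∧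
    (1 / 2 ≤ α → ∀ h : ℝ, 1 < h → massPoly 1 α h ≠ 0) := by
  have root_iff {h : ℝ} (hh : 1 < h) : massPoly 1 α h = 0 ↔ massRatio h = α :=
    massPoly_one_eq_zero_iff (zero_le_one.trans hh.le) hh.ne'
  have mem {h : ℝ} (hh : 1 ≤ h) : h ∈ Set.Ici (0 : ℝ) := zero_le_one.trans hh
  refine ⟨fun hα2 => ?_, fun hα2 h hh hP => ?_⟩
  · obtain ⟨hL, hL1, hρ⟩ := exists_massRatio_eq hα.1 hα2
    refine ⟨hL, hL1, (root_iff hL1).2 hρ, hρ ▸ rpow_inv_massRatio_sub_one_lt hL1,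
      fun h hh hP => ?_⟩
    exact massRatio_strictAntiOn.injOn (mem hh.le) (mem hL1.le)
      (((root_iff hh).1 hP).trans hρ.symm)
  · have := massRatio_strictAntiOn (mem le_rfl) (mem hh.le) hh
    rw [massRatio_one, (root_iff hh).1 hP] at this
    linarith
end

section
/- Fix V̄ > 0 and let 0 < α₁ < α₂ < 1. (a) If h₁, h₂ > 1 satisfy 𝒫_{α₁}(h₁) = 0 and 𝒫_{α₂}(h₂) = 0 with h₁ ≥ ((1/α₁) − 1)^{1/4} and h₂ ≥ ((1/α₂) − 1)^{1/4}, then h₁ > h₂. (b) If in addition 0 < V̄ < 1, and h₁, h₂ satisfy 𝒫_{α₁}(h₁) = 0 and 𝒫_{α₂}(h₂) = 0 with 1 < h₁ ≤ ((1/α₁) − 1)^{1/4} and 1 < h₂ ≤ ((1/α₂) − 1)^{1/4}, then h₁ < h₂. -/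
lemma strictMono_massPoly_of_one_lt (V : ℝ) {h : ℝ} (hh : 1 < h) :
    StrictMono fun α => massPoly V α h := by
  intro a b hab
  have key : massPoly V b h - massPoly V a h =
      (b - a) * (h ^ 2 - 1) * (h ^ 4 + 4 * h ^ 2 + 1) := by
    unfold massPoly; ring
  have hsq : 0 < h ^ 2 - 1 := by nlinarith
  have : 0 < (b - a) * (h ^ 2 - 1) * (h ^ 4 + 4 * h ^ 2 + 1) :=
    mul_pos (mul_pos (sub_pos.2 hab) hsq) (by positivity)
  simp only
  linarith

section CrossMultiplied

variable (V : ℝ) {a u v : ℝ}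

lemma massPoly_mul_pow_le_of_threshold_le (ha : 0 ≤ a) (hv : 0 ≤ v) (hvu : v ≤ u)
    (hthr : 1 - a ≤ a * v ^ 4) :
    massPoly V a v * u ^ 3 ≤ massPoly V a u * v ^ 3 := by
  have key : massPoly V a u * v ^ 3 - massPoly V a v * u ^ 3 =
      (u - v) * (a * v ^ 3 * (u - v) *
          (u ^ 2 * (u ^ 2 + 2 * u * v + 3 * v ^ 2) + (3 * u ^ 2 + 2 * u * v + v ^ 2)) +
        (a * v ^ 4 - (1 - a)) * (u ^ 2 + u * v + v ^ 2 + 3 * u ^ 2 * v ^ 2)) := by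
    unfold massPoly; ring
  have hu : 0 ≤ u := hv.trans hvu
  have hd : 0 ≤ u - v := sub_nonneg.2 hvu
  rw [← sub_nonneg, key]
  exact mul_nonneg hd <| add_nonneg (mul_nonneg (mul_nonneg (by positivity) hd) (by positivity))
    (mul_nonneg (sub_nonneg.2 hthr) (by positivity))

lemma massPoly_mul_pow_le_of_le_threshold (ha : 0 ≤ a) (hv : 0 ≤ v) (hvu : v ≤ u)
    (hthr : a * u ^ 4 ≤ 1 - a) :
    massPoly V a u * v ^ 3 ≤ massPoly V a v * u ^ 3 := by
  have key : massPoly V a v * u ^ 3 - massPoly V a u * v ^ 3 =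
      (u - v) * (a * u ^ 3 * (u - v) *
          ((u ^ 2 + 2 * u * v + 3 * v ^ 2) + v ^ 2 * (3 * u ^ 2 + 2 * u * v + v ^ 2)) +
        (1 - a - a * u ^ 4) * (u ^ 2 + u * v + v ^ 2 + 3 * u ^ 2 * v ^ 2)) := by
    unfold massPoly; ring
  have hu : 0 ≤ u := hv.trans hvu
  have hd : 0 ≤ u - v := sub_nonneg.2 hvu
  rw [← sub_nonneg, key]
  exact mul_nonneg hd <| add_nonneg (mul_nonneg (mul_nonneg (by positivity) hd) (by positivity))
    (mul_nonneg (sub_nonneg.2 hthr) (by positivity))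

end CrossMultiplied

section Threshold

variable {a h : ℝ}

lemma one_div_sub_one_rpow_quarter_le_iff (ha : 0 < a) (ha₁ : a ≤ 1) (hh : 0 ≤ h) :
    (1 / a - 1) ^ ((1 : ℝ) / 4) ≤ h ↔ 1 - a ≤ a * h ^ 4 := by
  have hx : 0 ≤ 1 / a - 1 := by rw [sub_nonneg, le_div_iff₀ ha]; linarith
  rw [show (1 : ℝ) / 4 = (4 : ℝ)⁻¹ by norm_num, Real.rpow_inv_le_iff_of_pos hx hh four_pos,
    Real.rpow_ofNat, div_sub_one ha.ne', div_le_iff₀ ha, mul_comm]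

lemma le_one_div_sub_one_rpow_quarter_iff (ha : 0 < a) (ha₁ : a ≤ 1) (hh : 0 ≤ h) :
    h ≤ (1 / a - 1) ^ ((1 : ℝ) / 4) ↔ a * h ^ 4 ≤ 1 - a := by
  have hx : 0 ≤ 1 / a - 1 := by rw [sub_nonneg, le_div_iff₀ ha]; linarith
  rw [show (1 : ℝ) / 4 = (4 : ℝ)⁻¹ by norm_num, Real.le_rpow_inv_iff_of_pos hh hx four_pos,
    Real.rpow_ofNat, div_sub_one ha.ne', le_div_iff₀ ha, mul_comm]

end Threshold

theorem stmt18_general (Vbar α₁ α₂ : ℝ)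
    (hα₁ : 0 < α₁) (hα₁₂ : α₁ < α₂) (hα₂ : α₂ < 1) :
    -- (a) the upper zero branch is strictly decreasing in α
    (∀ h₁ h₂ : ℝ, 1 < h₁ → 1 < h₂ →
      massPoly Vbar α₁ h₁ = 0 → massPoly Vbar α₂ h₂ = 0 →
      (1 / α₁ - 1) ^ ((1 : ℝ) / 4) ≤ h₁ → (1 / α₂ - 1) ^ ((1 : ℝ) / 4) ≤ h₂ →
      h₂ < h₁) ∧
    -- (b) for 0 < V̄ < 1, the lower zero branch is strictly increasing in α
    (Vbar < 1 →
      ∀ h₁ h₂ : ℝ, 1 < h₁ → 1 < h₂ →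
        massPoly Vbar α₁ h₁ = 0 → massPoly Vbar α₂ h₂ = 0 →
        h₁ ≤ (1 / α₁ - 1) ^ ((1 : ℝ) / 4) → h₂ ≤ (1 / α₂ - 1) ^ ((1 : ℝ) / 4) →
        h₁ < h₂) := by
  have hα₁_le : α₁ ≤ 1 := (hα₁₂.trans hα₂).le
  refine ⟨fun h₁ h₂ hh₁ hh₂ e₁ e₂ hthr _ => ?_, fun _ h₁ h₂ hh₁ hh₂ e₁ e₂ hthr _ => ?_⟩
  · by_contra! h₁₂
    have hthr' := (one_div_sub_one_rpow_quarter_le_iff hα₁ hα₁_le (by linarith)).1 hthr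
    have hmono := massPoly_mul_pow_le_of_threshold_le Vbar hα₁.le (by linarith) h₁₂ hthr'
    rw [e₁, zero_mul] at hmono
    have := strictMono_massPoly_of_one_lt Vbar hh₂ hα₁₂
    linarith [nonneg_of_mul_nonneg_left hmono (by positivity)]
  · by_contra! h₂₁
    have hthr' := (le_one_div_sub_one_rpow_quarter_iff hα₁ hα₁_le (by linarith)).1 hthr
    have hmono := massPoly_mul_pow_le_of_le_threshold Vbar hα₁.le (by linarith) h₂₁ hthr'
    rw [e₁, zero_mul] at hmono
    have := strictMono_massPoly_of_one_lt Vbar hh₂ hα₁₂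
    linarith [nonneg_of_mul_nonneg_left hmono (by positivity)]

theorem stmt18 (Vbar α₁ α₂ : ℝ) (hV : 0 < Vbar)
    (hα₁ : 0 < α₁) (hα₁₂ : α₁ < α₂) (hα₂ : α₂ < 1) :
    -- (a) the upper zero branch is strictly decreasing in α
    (∀ h₁ h₂ : ℝ, 1 < h₁ → 1 < h₂ →
      massPoly Vbar α₁ h₁ = 0 → massPoly Vbar α₂ h₂ = 0 →
      (1 / α₁ - 1) ^ ((1 : ℝ) / 4) ≤ h₁ → (1 / α₂ - 1) ^ ((1 : ℝ) / 4) ≤ h₂ →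
      h₂ < h₁) ∧
    -- (b) for 0 < V̄ < 1, the lower zero branch is strictly increasing in α
    (Vbar < 1 →
      ∀ h₁ h₂ : ℝ, 1 < h₁ → 1 < h₂ →
        massPoly Vbar α₁ h₁ = 0 → massPoly Vbar α₂ h₂ = 0 →
        h₁ ≤ (1 / α₁ - 1) ^ ((1 : ℝ) / 4) → h₂ ≤ (1 / α₂ - 1) ^ ((1 : ℝ) / 4) →
        h₁ < h₂) :=
  stmt18_general Vbar α₁ α₂ hα₁ hα₁₂ hα₂
end
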